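/- A 2D spatially-coupled code with component matrices H_{i,j} (Pauli-valued r×n matrices, 0 ≤ i ≤ m₁, 0 ≤ j ≤ m₂) and characteristic function F(U,V) = Σ_{i,j} H_{i,j} U^i V^j satisfies the stabilizer commutativity conditions if and only if the symplectic inner product polynomial ⟨F(U,V), F(U⁻¹,V⁻¹)⟩_s is identically zero (the zero r×r matrix polynomial). -/

import Mathlib

open Matrix Finset

/-- Symplectic inner product of Pauli-symbol matrices (Pauli symbols identified with `F₂²`). -/
def sympMat {r₁ r₂ n : ℕ} (P : Matrix (Fin r₁) (Fin n) (ZMod 2 × ZMod 2))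
    (Q : Matrix (Fin r₂) (Fin n) (ZMod 2 × ZMod 2)) : Matrix (Fin r₁) (Fin r₂) (ZMod 2) :=
  fun i j => ∑ k, ((P i k).1 * (Q j k).2 + (P i k).2 * (Q j k).1)

/-!
The `(k, l)` coefficient of `⟨F(U,V), F(U⁻¹,V⁻¹)⟩_s` is the correlation
`Σ_{i,j} ⟨H_{i,j}, H_{i-k,j-l}⟩_s`. Swapping the arguments of the symplectic form transposes it,
so the coefficient at `-(k, l)` is the transpose of the one at `(k, l)` and only shifts in a
half-plane matter. There, shifts outside the support box give zero, and the remaining ones are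
exactly the two families of commutativity sums, for the shifts `(d₁, d₂)` and `(-d₁, d₂)`.
-/

lemma sum_Icc_zero_natCast {M : Type*} [AddCommMonoid M] (k : ℕ) (f : ℤ → M) :
    ∑ i ∈ Icc (0 : ℤ) k, f i = ∑ i ∈ range (k + 1), f i := by
  rw [Int.Icc_eq_finset_map, sum_map]
  simp

lemma finsum_prod_eq_sum_Icc {M : Type*} [AddCommMonoid M] (g : ℤ → ℤ → M) (a₁ b₁ a₂ b₂ : ℤ)
    (hg : ∀ i j, g i j ≠ 0 → a₁ ≤ i ∧ i ≤ b₁ ∧ a₂ ≤ j ∧ j ≤ b₂) :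
    ∑ᶠ p : ℤ × ℤ, g p.1 p.2 = ∑ i ∈ Icc a₁ b₁, ∑ j ∈ Icc a₂ b₂, g i j := by
  rw [finsum_eq_sum_of_support_subset (s := Icc a₁ b₁ ×ˢ Icc a₂ b₂), sum_product]
  intro p hp
  simpa only [coe_product, Set.mem_prod, coe_Icc, Set.mem_Icc, and_assoc] using hg p.1 p.2 hp

lemma finsum_prod_eq_sum_range {M : Type*} [AddCommMonoid M] (g : ℤ → ℤ → M) (a b : ℕ)
    (hg : ∀ i j, g i j ≠ 0 → 0 ≤ i ∧ i ≤ a ∧ 0 ≤ j ∧ j ≤ b) :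
    ∑ᶠ p : ℤ × ℤ, g p.1 p.2 = ∑ i ∈ range (a + 1), ∑ j ∈ range (b + 1), g i j := by
  simp only [finsum_prod_eq_sum_Icc g 0 a 0 b hg, sum_Icc_zero_natCast]

lemma forall_eq_zero_iff_of_neg {M : Type*} [Zero M] (m₁ m₂ : ℕ) (f : ℤ → ℤ → M)
    (hneg : ∀ a b, f a b = 0 → f (-a) (-b) = 0)
    (hout : ∀ a b, (m₁ : ℤ) < |a| ∨ (m₂ : ℤ) < |b| → f a b = 0) :
    (∀ a b, f a b = 0) ↔
      ∀ d₁ d₂ : ℕ, d₁ ≤ m₁ → d₂ ≤ m₂ → f d₁ d₂ = 0 ∧ f (-d₁) d₂ = 0 := by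
  refine ⟨fun h d₁ d₂ _ _ => ⟨h _ _, h _ _⟩, fun h => ?_⟩
  have upper : ∀ a (b : ℕ), f a b = 0 := by
    intro a b
    by_cases hab : (m₁ : ℤ) < |a| ∨ (m₂ : ℤ) < |(b : ℤ)|
    · exact hout a b hab
    simp only [not_or, not_lt, abs_le] at hab
    obtain ⟨k, rfl | rfl⟩ := Int.eq_nat_or_neg a
    · exact (h k b (by omega) (by omega)).1
    · exact (h k b (by omega) (by omega)).2
  intro a b
  obtain ⟨l, rfl | rfl⟩ := Int.eq_nat_or_neg b
  · exact upper a l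
  · simpa using hneg (-a) l (upper (-a) l)

lemma sympMat_zero_left {r₁ r₂ n : ℕ} (Q : Matrix (Fin r₂) (Fin n) (ZMod 2 × ZMod 2)) :
    sympMat (0 : Matrix (Fin r₁) (Fin n) (ZMod 2 × ZMod 2)) Q = 0 := by
  ext i j; simp [sympMat]

lemma sympMat_zero_right {r₁ r₂ n : ℕ} (P : Matrix (Fin r₁) (Fin n) (ZMod 2 × ZMod 2)) :
    sympMat P (0 : Matrix (Fin r₂) (Fin n) (ZMod 2 × ZMod 2)) = 0 := by
  ext i j; simp [sympMat]

lemma transpose_sympMat {r₁ r₂ n : ℕ} (P : Matrix (Fin r₁) (Fin n) (ZMod 2 × ZMod 2))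
    (Q : Matrix (Fin r₂) (Fin n) (ZMod 2 × ZMod 2)) :
    (sympMat P Q)ᵀ = sympMat Q P := by
  ext i j
  simp only [sympMat, transpose_apply]
  exact sum_congr rfl fun k _ => by ring

lemma sympMat_ne_zero {r₁ r₂ n : ℕ} {P : Matrix (Fin r₁) (Fin n) (ZMod 2 × ZMod 2)}
    {Q : Matrix (Fin r₂) (Fin n) (ZMod 2 × ZMod 2)} (h : sympMat P Q ≠ 0) : P ≠ 0 ∧ Q ≠ 0 :=
  ⟨by rintro rfl; exact h (sympMat_zero_left Q), by rintro rfl; exact h (sympMat_zero_right P)⟩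

/-- The coefficient of `U^(-d₁) V^(-d₂)` in `⟨F(U,V), F(U⁻¹,V⁻¹)⟩_s`. -/
noncomputable def sympCorr {r n : ℕ} (H : ℤ → ℤ → Matrix (Fin r) (Fin n) (ZMod 2 × ZMod 2))
    (d₁ d₂ : ℤ) : Matrix (Fin r) (Fin r) (ZMod 2) :=
  ∑ᶠ p : ℤ × ℤ, sympMat (H p.1 p.2) (H (p.1 + d₁) (p.2 + d₂))

lemma sympCorr_sub {r n : ℕ} (H : ℤ → ℤ → Matrix (Fin r) (Fin n) (ZMod 2 × ZMod 2))
    (a₁ a₂ b₁ b₂ : ℤ) :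
    sympCorr H (b₁ - a₁) (b₂ - a₂) =
      ∑ᶠ p : ℤ × ℤ, sympMat (H (p.1 + a₁) (p.2 + a₂)) (H (p.1 + b₁) (p.2 + b₂)) := by
  rw [sympCorr, ← finsum_comp_equiv (Equiv.addRight (a₁, a₂))]
  simp [add_assoc]

lemma sympCorr_neg {r n : ℕ} (H : ℤ → ℤ → Matrix (Fin r) (Fin n) (ZMod 2 × ZMod 2))
    (d₁ d₂ : ℤ) : sympCorr H (-d₁) (-d₂) = (sympCorr H d₁ d₂)ᵀ := by
  rw [← zero_sub, ← zero_sub d₂, sympCorr_sub H d₁ d₂ 0 0, sympCorr]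
  refine Eq.trans ?_ ((transposeAddEquiv (Fin r) (Fin r) (ZMod 2)).map_finsum _).symm
  simp [transpose_sympMat]

lemma sympCorr_eq_zero_of_lt_abs {m₁ m₂ r n : ℕ}
    {H : ℤ → ℤ → Matrix (Fin r) (Fin n) (ZMod 2 × ZMod 2)}
    (hH : ∀ i j, H i j ≠ 0 → 0 ≤ i ∧ i ≤ m₁ ∧ 0 ≤ j ∧ j ≤ m₂) (d₁ d₂ : ℤ)
    (hd : (m₁ : ℤ) < |d₁| ∨ (m₂ : ℤ) < |d₂|) : sympCorr H d₁ d₂ = 0 := by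
  refine finsum_eq_zero_of_forall_eq_zero fun p => ?_
  by_contra hp
  have hp₁ := hH _ _ (sympMat_ne_zero hp).1
  have hp₂ := hH _ _ (sympMat_ne_zero hp).2
  rw [lt_abs, lt_abs] at hd
  omega

/-- Theorem 2: a 2D-SC code with component matrices `H i j` (supported on
`0 ≤ i ≤ m₁`, `0 ≤ j ≤ m₂`, these being the coefficients of the characteristic
function `F(U,V) = Σ H_{i,j}U^iV^j`) satisfies the stabilizer commutativity
conditions iff every coefficient of `⟨F(U,V), F(U⁻¹,V⁻¹)⟩_s` vanishes. -/
theorem characteristic_function_condition (m₁ m₂ r n : ℕ)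
    (H : ℤ → ℤ → Matrix (Fin r) (Fin n) (ZMod 2 × ZMod 2))
    (hsupp : ∀ i j : ℤ, (i < 0 ∨ (m₁ : ℤ) < i ∨ j < 0 ∨ (m₂ : ℤ) < j) → H i j = 0) :
    (∀ d₁ d₂ : ℤ,
      ∑ i ∈ Finset.Icc (0 : ℤ) (m₁ : ℤ), ∑ j ∈ Finset.Icc (0 : ℤ) (m₂ : ℤ),
        sympMat (H i j) (H (i + d₁) (j + d₂)) = 0)
    ↔ (∀ d₁ d₂ : ℕ, d₁ ≤ m₁ → d₂ ≤ m₂ →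
        (∑ i ∈ Finset.range (m₁ - d₁ + 1), ∑ j ∈ Finset.range (m₂ - d₂ + 1),
          sympMat (H (i : ℤ) (j : ℤ)) (H ((i : ℤ) + (d₁ : ℤ)) ((j : ℤ) + (d₂ : ℤ))) = 0) ∧
        (∑ i ∈ Finset.range (m₁ - d₁ + 1), ∑ j ∈ Finset.range (m₂ - d₂ + 1),
          sympMat (H ((i : ℤ) + (d₁ : ℤ)) (j : ℤ)) (H (i : ℤ) ((j : ℤ) + (d₂ : ℤ))) = 0)) := by
  have hH : ∀ i j, H i j ≠ 0 → 0 ≤ i ∧ i ≤ m₁ ∧ 0 ≤ j ∧ j ≤ m₂ := fun i j h => by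
    by_contra h'
    exact h (hsupp i j (by omega))
  have hcorr (d₁ d₂ : ℤ) : ∑ i ∈ Icc (0 : ℤ) m₁, ∑ j ∈ Icc (0 : ℤ) m₂,
      sympMat (H i j) (H (i + d₁) (j + d₂)) = sympCorr H d₁ d₂ :=
    (finsum_prod_eq_sum_Icc _ _ _ _ _ fun i j h => hH i j (sympMat_ne_zero h).1).symm
  have hfirst (d₁ d₂ : ℕ) : ∑ i ∈ range (m₁ - d₁ + 1), ∑ j ∈ range (m₂ - d₂ + 1),
      sympMat (H i j) (H (i + d₁ : ℤ) (j + d₂ : ℤ)) = sympCorr H d₁ d₂ := by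
    refine (finsum_prod_eq_sum_range (fun i j => sympMat (H i j) (H (i + d₁) (j + d₂))) _ _
      fun i j h => ?_).symm
    have hleft := hH _ _ (sympMat_ne_zero h).1
    have hright := hH _ _ (sympMat_ne_zero h).2
    omega
  have hsecond (d₁ d₂ : ℕ) : ∑ i ∈ range (m₁ - d₁ + 1), ∑ j ∈ range (m₂ - d₂ + 1),
      sympMat (H (i + d₁ : ℤ) j) (H i (j + d₂ : ℤ)) = sympCorr H (-d₁) d₂ := by
    have hshift := sympCorr_sub H d₁ 0 0 d₂
    simp only [zero_sub, sub_zero, add_zero] at hshift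
    rw [hshift]
    refine (finsum_prod_eq_sum_range (fun i j => sympMat (H (i + d₁) j) (H i (j + d₂))) _ _
      fun i j h => ?_).symm
    have hleft := hH _ _ (sympMat_ne_zero h).1
    have hright := hH _ _ (sympMat_ne_zero h).2
    omega
  simp only [hcorr, hfirst, hsecond]
  refine forall_eq_zero_iff_of_neg m₁ m₂ _ (fun a b h => ?_) (sympCorr_eq_zero_of_lt_abs hH)
  rw [sympCorr_neg, h, transpose_zero]
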